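/- arXiv:1304.0996 — 2 statements merged into one kernel-verified Lean document; each statement's English description precedes it below -/
import Mathlib

section
/- Let g : ℝ → ℂ be continuous and consider the linear ODE system on ℝ for T : ℝ → ℝ³ and N : ℝ → ℂ³: T'(x) = Re(g(x)·N(x)) and N'(x) = −conj(g(x))·T(x). If at x = 0 the data satisfy |T(0)| = 1, ⟨T(0), Re N(0)⟩ = 0, ⟨T(0), Im N(0)⟩ = 0, ⟨Re N(0), Im N(0)⟩ = 0 and |Re N(0)| = |Im N(0)| = 1, then these relations hold for all x ∈ ℝ: |T(x)| = 1, T(x) ⟂ Re N(x), T(x) ⟂ Im N(x), Re N(x) ⟂ Im N(x), and |Re N(x)| = |Im N(x)| = 1. -/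
open scoped RealInnerProductSpace

/-!
The frame `e = (T, Re N, Im N)` satisfies `e' = A e` with the skew-symmetric coefficient matrix
`A = [[0, a, -b], [-a, 0, 0], [b, 0, 0]]`, `g = a + i b`. Its Gram matrix `G = (⟪e i, e j⟫)` then
satisfies `G' = A G - G A`, and so does `D = G - 1`. For symmetric `D` the Frobenius product
`⟨D, A D - D A⟩ = tr (D A D) - tr (D D A)` vanishes, so `∑ D i j ^ 2` is constant; it is `0` at
the initial time, hence `G = 1` throughout.
-/

namespace Matrix

variable {n : Type*}

theorem IsSymm.sum_mul_commutator_self_eq_zero {R : Type*} [Fintype n] [CommRing R]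
    {D : Matrix n n R} (hD : D.IsSymm) (A : Matrix n n R) :
    ∑ i, ∑ j, D i j * (A * D - D * A) i j = 0 := by
  have h : ∑ i, ∑ j, D i j * (A * D - D * A) i j = trace (D * (A * D - D * A)ᵀ) := by
    simp only [trace, diag, mul_apply, transpose_apply]
  rw [h, transpose_sub, transpose_mul, transpose_mul, hD.eq, Matrix.mul_sub, trace_sub,
    ← Matrix.mul_assoc, ← Matrix.mul_assoc, trace_mul_cycle D Aᵀ D, sub_self]

theorem sum_sum_sq_eq_zero_iff {m R : Type*} [Fintype m] [Fintype n] [CommRing R] [LinearOrder R]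
    [IsStrictOrderedRing R] {D : Matrix m n R} : ∑ i, ∑ j, D i j ^ 2 = 0 ↔ D = 0 := by
  rw [Fintype.sum_eq_zero_iff_of_nonneg fun i ↦ Fintype.sum_nonneg fun j ↦ sq_nonneg (D i j)]
  simp only [funext_iff, Pi.zero_apply, Fintype.sum_eq_zero_iff_of_nonneg fun j ↦ sq_nonneg _,
    pow_eq_zero_iff two_ne_zero, ← Matrix.ext_iff, Matrix.zero_apply]

variable {E : Type*} [NormedAddCommGroup E] [InnerProductSpace ℝ E]

theorem isSymm_gram (v : n → E) : (gram ℝ v).IsSymm :=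
  isHermitian_iff_isSymm.mp (isHermitian_gram ℝ v)

end Matrix

section SkewFrame

open Matrix

variable {n E : Type*} [Fintype n] [NormedAddCommGroup E] [InnerProductSpace ℝ E]

theorem hasDerivAt_gram_of_transpose_eq_neg {e : ℝ → n → E} {A : Matrix n n ℝ} {t : ℝ}
    (hA : Aᵀ = -A) (he : ∀ i, HasDerivAt (fun s ↦ e s i) (∑ j, A i j • e t j) t) (i j : n) :
    HasDerivAt (fun s ↦ gram ℝ (e s) i j) ((A * gram ℝ (e t) - gram ℝ (e t) * A) i j) t := by
  refine ((he i).inner ℝ (he j)).congr_deriv ?_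
  have hAji : ∀ k, A k j = -A j k := fun k ↦ by simpa using congr_fun₂ hA j k
  simp only [inner_sum, real_inner_smul_right, Matrix.sub_apply, mul_apply, gram_apply, hAji,
    real_inner_comm (e t j), mul_neg, Finset.sum_neg_distrib, sub_neg_eq_add]
  rw [add_comm]
  simp only [mul_comm]

theorem orthonormal_of_hasDerivAt_of_transpose_eq_neg [DecidableEq n]
    {e : ℝ → n → E} {A : ℝ → Matrix n n ℝ} (hA : ∀ t, (A t)ᵀ = -A t)
    (he : ∀ t i, HasDerivAt (fun s ↦ e s i) (∑ j, A t i j • e t j) t) {t₀ : ℝ}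
    (h₀ : Orthonormal ℝ (e t₀)) (t : ℝ) : Orthonormal ℝ (e t) := by
  let D : ℝ → Matrix n n ℝ := fun s ↦ gram ℝ (e s) - 1
  have hD : ∀ s i j, HasDerivAt (fun s ↦ D s i j) ((A s * D s - D s * A s) i j) s :=
    fun s i j ↦ ((hasDerivAt_gram_of_transpose_eq_neg (hA s) (he s) i j).sub_const
      ((1 : Matrix n n ℝ) i j)).congr_deriv (by simp [D, Matrix.mul_sub, Matrix.sub_mul])
  have hΦ : ∀ s, HasDerivAt (fun s ↦ ∑ i, ∑ j, D s i j ^ 2) 0 s := fun s ↦ by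
    refine (HasDerivAt.fun_sum fun i _ ↦ HasDerivAt.fun_sum fun j _ ↦
      (hD s i j).pow 2).congr_deriv ?_
    have hDs : (D s).IsSymm := (isSymm_gram _).sub isSymm_one
    simp only [Nat.cast_ofNat, Nat.reduceSub, pow_one, mul_assoc, ← Finset.mul_sum,
      hDs.sum_mul_commutator_self_eq_zero, mul_zero]
  have hΦt : ∑ i, ∑ j, D t i j ^ 2 = ∑ i, ∑ j, D t₀ i j ^ 2 :=
    is_const_of_deriv_eq_zero (fun s ↦ (hΦ s).differentiableAt) (fun s ↦ (hΦ s).deriv) t t₀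
  rw [sum_sum_sq_eq_zero_iff.mpr (sub_eq_zero.mpr (gram_eq_one_iff_orthonormal.mpr h₀)),
    sum_sum_sq_eq_zero_iff, sub_eq_zero] at hΦt
  exact gram_eq_one_iff_orthonormal.mp hΦt

end SkewFrame

theorem orthonormal_vecCons_three_iff {𝕜 E : Type*} [RCLike 𝕜] [NormedAddCommGroup E]
    [InnerProductSpace 𝕜 E] {u v w : E} :
    Orthonormal 𝕜 ![u, v, w] ↔
      (‖u‖ = 1 ∧ ‖v‖ = 1 ∧ ‖w‖ = 1) ∧ inner 𝕜 u v = 0 ∧ inner 𝕜 u w = 0 ∧ inner 𝕜 v w = 0 := by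
  refine ⟨fun h ↦ ⟨⟨h.1 0, h.1 1, h.1 2⟩, h.2 (by decide : (0 : Fin 3) ≠ 1),
    h.2 (by decide : (0 : Fin 3) ≠ 2), h.2 (by decide : (1 : Fin 3) ≠ 2)⟩, ?_⟩
  rintro ⟨⟨hu, hv, hw⟩, huv, huw, hvw⟩
  refine ⟨fun i ↦ by fin_cases i <;> assumption, fun i j hij ↦ ?_⟩
  fin_cases i <;> fin_cases j <;> simp_all [inner_eq_zero_symm]

theorem stmt5_general (g : ℝ → ℂ)
    (T Nr Ni : ℝ → EuclideanSpace ℝ (Fin 3))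
    (hT : ∀ x, HasDerivAt T ((g x).re • Nr x - (g x).im • Ni x) x)
    (hNr : ∀ x, HasDerivAt Nr (-((g x).re • T x)) x)
    (hNi : ∀ x, HasDerivAt Ni ((g x).im • T x) x)
    (h1 : ‖T 0‖ = 1)
    (h2 : ⟪T 0, Nr 0⟫ = 0) (h3 : ⟪T 0, Ni 0⟫ = 0) (h4 : ⟪Nr 0, Ni 0⟫ = 0)
    (h5 : ‖Nr 0‖ = 1) (h6 : ‖Ni 0‖ = 1) :
    ∀ x : ℝ, ‖T x‖ = 1 ∧ ⟪T x, Nr x⟫ = 0 ∧ ⟪T x, Ni x⟫ = 0 ∧ ⟪Nr x, Ni x⟫ = 0 ∧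
      ‖Nr x‖ = 1 ∧ ‖Ni x‖ = 1 := by
  let A : ℝ → Matrix (Fin 3) (Fin 3) ℝ := fun x ↦
    !![0, (g x).re, -(g x).im; -(g x).re, 0, 0; (g x).im, 0, 0]
  have hA : ∀ x, (A x).transpose = -A x := fun x ↦ by
    ext i j; fin_cases i <;> fin_cases j <;> simp [A]
  have he : ∀ x i, HasDerivAt (fun s ↦ ![T s, Nr s, Ni s] i)
      (∑ j, A x i j • ![T x, Nr x, Ni x] j) x := fun x i ↦ by
    fin_cases i
    · simpa [A, Fin.sum_univ_three, sub_eq_add_neg] using hT x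
    · simpa [A, Fin.sum_univ_three] using hNr x
    · simpa [A, Fin.sum_univ_three] using hNi x
  have h₀ : Orthonormal ℝ ![T 0, Nr 0, Ni 0] :=
    orthonormal_vecCons_three_iff.mpr ⟨⟨h1, h5, h6⟩, h2, h3, h4⟩
  intro x
  obtain ⟨⟨hTx, hNrx, hNix⟩, hTNr, hTNi, hNrNi⟩ :=
    orthonormal_vecCons_three_iff.mp (orthonormal_of_hasDerivAt_of_transpose_eq_neg hA he h₀ x)
  exact ⟨hTx, hTNr, hTNi, hNrNi, hNrx, hNix⟩

/-- The generalized Frenet system `T' = Re(g·N)`, `N' = -conj(g)·T` (with `N = Nr + i Ni`)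
preserves orthonormality of the frame `(T, Re N, Im N)`. -/
theorem stmt5 (g : ℝ → ℂ) (hg : Continuous g)
    (T Nr Ni : ℝ → EuclideanSpace ℝ (Fin 3))
    (hT : ∀ x, HasDerivAt T ((g x).re • Nr x - (g x).im • Ni x) x)
    (hNr : ∀ x, HasDerivAt Nr (-((g x).re • T x)) x)
    (hNi : ∀ x, HasDerivAt Ni ((g x).im • T x) x)
    (h1 : ‖T 0‖ = 1)
    (h2 : ⟪T 0, Nr 0⟫ = 0) (h3 : ⟪T 0, Ni 0⟫ = 0) (h4 : ⟪Nr 0, Ni 0⟫ = 0)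
    (h5 : ‖Nr 0‖ = 1) (h6 : ‖Ni 0‖ = 1) :
    ∀ x : ℝ, ‖T x‖ = 1 ∧ ⟪T x, Nr x⟫ = 0 ∧ ⟪T x, Ni x⟫ = 0 ∧ ⟪Nr x, Ni x⟫ = 0 ∧
      ‖Nr x‖ = 1 ∧ ‖Ni x‖ = 1 :=
  stmt5_general g T Nr Ni hT hNr hNi h1 h2 h3 h4 h5 h6
end

section
/- Let a ∈ ℝ, and let ω : (0,∞) × ℝ → ℂ be a smooth solution of i ω_t + ω_xx + (a²/(2t))(ω + conj(ω)) = 0. Define v(t,x) = x·ω(t,x) + 2 i t ∂_x ω(t,x). Then v satisfies i v_t + v_xx + (a²/(2t))(v + conj(v)) = −2 i a² ∂_x conj(ω). -/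
open Complex Set

/-- The function `(t,x) ↦ ω t x` as a function on the product space. -/
noncomputable def Fp (ω : ℝ → ℝ → ℂ) : ℝ × ℝ → ℂ := fun p => ω p.1 p.2

/-- Partial derivative in the second (space) variable. -/
noncomputable def PX (f : ℝ × ℝ → ℂ) : ℝ × ℝ → ℂ := fun p => fderiv ℝ f p (0, 1)

/-- Partial derivative in the first (time) variable. -/
noncomputable def PT (f : ℝ × ℝ → ℂ) : ℝ × ℝ → ℂ := fun p => fderiv ℝ f p (1, 0)

lemma PX_hasDerivAt {f : ℝ × ℝ → ℂ} {s y : ℝ} (h : DifferentiableAt ℝ f (s, y)) :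
    HasDerivAt (fun z => f (s, z)) (PX f (s, y)) y := by
  have h1 : HasDerivAt (fun z : ℝ => ((s, z) : ℝ × ℝ)) ((0 : ℝ), (1 : ℝ)) y :=
    (hasDerivAt_const y s).prodMk (hasDerivAt_id y)
  exact h.hasFDerivAt.comp_hasDerivAt_of_eq _ h1 rfl

lemma PT_hasDerivAt {f : ℝ × ℝ → ℂ} {s y : ℝ} (h : DifferentiableAt ℝ f (s, y)) :
    HasDerivAt (fun τ => f (τ, y)) (PT f (s, y)) s := by
  have h1 : HasDerivAt (fun τ : ℝ => ((τ, y) : ℝ × ℝ)) ((1 : ℝ), (0 : ℝ)) s :=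
    (hasDerivAt_id s).prodMk (hasDerivAt_const s y)
  exact h.hasFDerivAt.comp_hasDerivAt_of_eq _ h1 rfl

/-- If `ω` solves `i ω_t + ω_xx + (a²/(2t))(ω + conj ω) = 0` on `(0,∞) × ℝ`, then
`v = J(t)ω = xω + 2it ω_x` solves
`i v_t + v_xx + (a²/(2t))(v + conj v) = -2i a² ∂_x conj(ω)`. -/
theorem stmt15 (a : ℝ) (ω : ℝ → ℝ → ℂ)
    (hsmooth : ContDiffOn ℝ (⊤ : ℕ∞) (fun p : ℝ × ℝ => ω p.1 p.2) (Ioi (0 : ℝ) ×ˢ (univ : Set ℝ)))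
    (heq : ∀ t > (0 : ℝ), ∀ x : ℝ,
      I * deriv (fun τ => ω τ x) t + deriv (fun y => deriv (fun z => ω t z) y) x +
        ((a : ℂ) ^ 2 / (2 * (t : ℂ))) * (ω t x + (starRingEnd ℂ) (ω t x)) = 0)
    (v : ℝ → ℝ → ℂ)
    (hv : ∀ t x : ℝ, v t x = (x : ℂ) * ω t x + 2 * I * (t : ℂ) * deriv (fun y => ω t y) x) :
    ∀ t > (0 : ℝ), ∀ x : ℝ,
      I * deriv (fun τ => v τ x) t + deriv (fun y => deriv (fun z => v t z) y) x +
        ((a : ℂ) ^ 2 / (2 * (t : ℂ))) * (v t x + (starRingEnd ℂ) (v t x)) =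
        -2 * I * (a : ℂ) ^ 2 * deriv (fun y => (starRingEnd ℂ) (ω t y)) x := by
  intro t ht x
  have hU : IsOpen (Ioi (0 : ℝ) ×ˢ (univ : Set ℝ)) := isOpen_Ioi.prod isOpen_univ
  have hFc : ContDiffOn ℝ (⊤ : ℕ∞) (Fp ω) (Ioi (0 : ℝ) ×ˢ (univ : Set ℝ)) := hsmooth
  have hF1 : ContDiffOn ℝ (⊤ : ℕ∞) (fderiv ℝ (Fp ω)) (Ioi (0 : ℝ) ×ˢ (univ : Set ℝ)) :=
    hFc.fderiv_of_isOpen hU (by simp)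
  have hGc : ContDiffOn ℝ (⊤ : ℕ∞) (PX (Fp ω)) (Ioi (0 : ℝ) ×ˢ (univ : Set ℝ)) :=
    hF1.clm_apply contDiffOn_const
  have hHc : ContDiffOn ℝ (⊤ : ℕ∞) (PT (Fp ω)) (Ioi (0 : ℝ) ×ˢ (univ : Set ℝ)) :=
    hF1.clm_apply contDiffOn_const
  have hG1 : ContDiffOn ℝ (⊤ : ℕ∞) (fderiv ℝ (PX (Fp ω))) (Ioi (0 : ℝ) ×ˢ (univ : Set ℝ)) :=
    hGc.fderiv_of_isOpen hU (by simp)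
  have hKc : ContDiffOn ℝ (⊤ : ℕ∞) (PX (PX (Fp ω))) (Ioi (0 : ℝ) ×ˢ (univ : Set ℝ)) :=
    hG1.clm_apply contDiffOn_const
  have hmem : ∀ (s y : ℝ), 0 < s → (s, y) ∈ Ioi (0 : ℝ) ×ˢ (univ : Set ℝ) :=
    fun s y hs => ⟨hs, mem_univ y⟩
  have dF : ∀ (s y : ℝ), 0 < s → DifferentiableAt ℝ (Fp ω) (s, y) := fun s y hs =>
    (hFc.contDiffAt (hU.mem_nhds (hmem s y hs))).differentiableAt (by simp)
  have dG : ∀ (s y : ℝ), 0 < s → DifferentiableAt ℝ (PX (Fp ω)) (s, y) := fun s y hs =>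
    (hGc.contDiffAt (hU.mem_nhds (hmem s y hs))).differentiableAt (by simp)
  have dH : ∀ (s y : ℝ), 0 < s → DifferentiableAt ℝ (PT (Fp ω)) (s, y) := fun s y hs =>
    (hHc.contDiffAt (hU.mem_nhds (hmem s y hs))).differentiableAt (by simp)
  have dK : ∀ (s y : ℝ), 0 < s → DifferentiableAt ℝ (PX (PX (Fp ω))) (s, y) := fun s y hs =>
    (hKc.contDiffAt (hU.mem_nhds (hmem s y hs))).differentiableAt (by simp)
  have dF1 : DifferentiableAt ℝ (fderiv ℝ (Fp ω)) (t, x) :=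
    (hF1.contDiffAt (hU.mem_nhds (hmem t x ht))).differentiableAt (by simp)
  -- first space derivative of ω
  have pωx : ∀ (s y : ℝ), 0 < s → deriv (fun z => ω s z) y = PX (Fp ω) (s, y) :=
    fun s y hs => (PX_hasDerivAt (dF s y hs)).deriv
  have pωt : ∀ (s y : ℝ), 0 < s → deriv (fun τ => ω τ y) s = PT (Fp ω) (s, y) :=
    fun s y hs => (PT_hasDerivAt (dF s y hs)).deriv
  -- the inner function in the second space derivative
  have hx1 : (fun y => deriv (fun z => ω t z) y) = fun y => PX (Fp ω) (t, y) :=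
    funext fun y => pωx t y ht
  -- PDE at (t,x) in terms of partial derivatives
  have E1 : I * PT (Fp ω) (t, x) + PX (PX (Fp ω)) (t, x) +
      ((a : ℂ) ^ 2 / (2 * (t : ℂ))) * (ω t x + (starRingEnd ℂ) (ω t x)) = 0 := by
    have h0 := heq t ht x
    rw [pωt t x ht, hx1, (PX_hasDerivAt (dG t x ht)).deriv] at h0
    exact h0
  -- PDE differentiated in x at (t,x)
  have E2 : I * PX (PT (Fp ω)) (t, x) + PX (PX (PX (Fp ω))) (t, x) +
      ((a : ℂ) ^ 2 / (2 * (t : ℂ))) * (PX (Fp ω) (t, x) + (starRingEnd ℂ) (PX (Fp ω) (t, x))) = 0 := by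
    have hd : HasDerivAt
        (fun y => I * PT (Fp ω) (t, y) + PX (PX (Fp ω)) (t, y) +
          ((a : ℂ) ^ 2 / (2 * (t : ℂ))) * (ω t y + (starRingEnd ℂ) (ω t y)))
        (I * PX (PT (Fp ω)) (t, x) + PX (PX (PX (Fp ω))) (t, x) +
          ((a : ℂ) ^ 2 / (2 * (t : ℂ))) * (PX (Fp ω) (t, x) + (starRingEnd ℂ) (PX (Fp ω) (t, x)))) x :=
      (((PX_hasDerivAt (dH t x ht)).const_mul I).add (PX_hasDerivAt (dK t x ht))).add
        (((PX_hasDerivAt (dF t x ht)).add (PX_hasDerivAt (dF t x ht)).star).const_mul _)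
    have h0 : (fun y => I * PT (Fp ω) (t, y) + PX (PX (Fp ω)) (t, y) +
        ((a : ℂ) ^ 2 / (2 * (t : ℂ))) * (ω t y + (starRingEnd ℂ) (ω t y))) = fun _ => (0 : ℂ) := by
      funext y
      have h1 := heq t ht y
      rw [pωt t y ht, hx1, (PX_hasDerivAt (dG t y ht)).deriv] at h1
      exact h1
    rw [h0] at hd
    exact hd.unique (hasDerivAt_const x 0)
  -- symmetry of second derivatives
  have hsym := (hFc.contDiffAt (hU.mem_nhds (hmem t x ht))).isSymmSndFDerivAt (by simp; exact WithTop.coe_le_coe.mpr (le_top : (2 : ℕ∞) ≤ ⊤))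
  have key : ∀ (vv ww : ℝ × ℝ),
      fderiv ℝ (fun p : ℝ × ℝ => fderiv ℝ (Fp ω) p vv) (t, x) ww =
      fderiv ℝ (fderiv ℝ (Fp ω)) (t, x) ww vv := by
    intro vv ww
    have h2 : fderiv ℝ (fun p : ℝ × ℝ => fderiv ℝ (Fp ω) p vv) (t, x) =
        (ContinuousLinearMap.apply ℝ ℂ vv).comp (fderiv ℝ (fderiv ℝ (Fp ω)) (t, x)) :=
      ((ContinuousLinearMap.apply ℝ ℂ vv).hasFDerivAt.comp (t, x) dF1.hasFDerivAt).fderiv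
    rw [h2]
    rfl
  have E3 : PX (PT (Fp ω)) (t, x) = PT (PX (Fp ω)) (t, x) :=
    calc PX (PT (Fp ω)) (t, x)
        = fderiv ℝ (fderiv ℝ (Fp ω)) (t, x) (0, 1) (1, 0) := key (1, 0) (0, 1)
      _ = fderiv ℝ (fderiv ℝ (Fp ω)) (t, x) (1, 0) (0, 1) := hsym _ _
      _ = PT (PX (Fp ω)) (t, x) := (key (0, 1) (1, 0)).symm
  -- time derivative of v
  have hoτ : HasDerivAt (fun τ : ℝ => (τ : ℂ)) 1 t := by
    simpa using (hasDerivAt_id t).ofReal_comp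
  have hev : (fun τ => v τ x) =ᶠ[nhds t]
      fun τ => (x : ℂ) * ω τ x + 2 * I * ((τ : ℂ) * PX (Fp ω) (τ, x)) := by
    filter_upwards [Ioi_mem_nhds ht] with τ hτ
    rw [hv τ x, pωx τ x hτ]
    ring
  have E4 : deriv (fun τ => v τ x) t =
      (x : ℂ) * PT (Fp ω) (t, x) +
        2 * I * (1 * PX (Fp ω) (t, x) + (t : ℂ) * PT (PX (Fp ω)) (t, x)) := by
    rw [hev.deriv_eq]
    exact (((PT_hasDerivAt (dF t x ht)).const_mul (x : ℂ)).add
      ((hoτ.mul (PT_hasDerivAt (dG t x ht))).const_mul (2 * I))).deriv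
  -- second space derivative of v
  have hinner : (fun y => deriv (fun z => v t z) y) =
      fun y => 1 * ω t y + (y : ℂ) * PX (Fp ω) (t, y) + 2 * I * (t : ℂ) * PX (PX (Fp ω)) (t, y) := by
    funext y
    have hvz : (fun z => v t z) =
        fun z : ℝ => (z : ℂ) * ω t z + 2 * I * (t : ℂ) * PX (Fp ω) (t, z) := by
      funext z; rw [hv t z, pωx t z ht]
    rw [hvz]
    have hoy : HasDerivAt (fun z : ℝ => (z : ℂ)) 1 y := by
      simpa using (hasDerivAt_id y).ofReal_comp
    exact ((hoy.mul (PX_hasDerivAt (dF t y ht))).add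
      ((PX_hasDerivAt (dG t y ht)).const_mul (2 * I * (t : ℂ)))).deriv
  have hox : HasDerivAt (fun z : ℝ => (z : ℂ)) 1 x := by
    simpa using (hasDerivAt_id x).ofReal_comp
  have E5 : deriv (fun y => deriv (fun z => v t z) y) x =
      1 * PX (Fp ω) (t, x) + (1 * PX (Fp ω) (t, x) + (x : ℂ) * PX (PX (Fp ω)) (t, x)) +
        2 * I * (t : ℂ) * PX (PX (PX (Fp ω))) (t, x) := by
    rw [hinner]
    exact ((((PX_hasDerivAt (dF t x ht)).const_mul 1).add
      (hox.mul (PX_hasDerivAt (dG t x ht)))).add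
      ((PX_hasDerivAt (dK t x ht)).const_mul (2 * I * (t : ℂ)))).deriv
  -- derivative of the conjugate
  have E7 : deriv (fun y => (starRingEnd ℂ) (ω t y)) x = (starRingEnd ℂ) (PX (Fp ω) (t, x)) :=
    ((PX_hasDerivAt (dF t x ht)).star).deriv
  have ht' : (t : ℂ) ≠ 0 := by
    exact_mod_cast ne_of_gt ht
  have hc : (a : ℂ) ^ 2 / (2 * (t : ℂ)) * (2 * (t : ℂ)) = (a : ℂ) ^ 2 := by
    field_simp
  rw [E4, E5, E7, hv t x, pωx t x ht]
  simp only [map_add, map_mul, map_ofNat, Complex.conj_I, Complex.conj_ofReal]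
  linear_combination (x : ℂ) * E1 + 2 * I * (t : ℂ) * E2 + 2 * (t : ℂ) * E3 +
    (-2 * I * (starRingEnd ℂ) (PX (Fp ω) (t, x))) * hc +
    (2 * PX (Fp ω) (t, x) + 2 * (t : ℂ) * PT (PX (Fp ω)) (t, x) -
      2 * (t : ℂ) * PX (PT (Fp ω)) (t, x)) * Complex.I_sq
end
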